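/- The type-1 X_1-Laguerre polynomials L̂_n(x;a) = -(x+a+1)(L_n^{(a)})'(x) + (x+a+2)L_n^{(a)}(x) satisfy, for every n ≥ 0 and real a, the five-term recurrence relation: (x^2 + (2a+2)x + a(a+1))·L̂_n(x;a) = L̂_{n+2}(x;a) + 4(n+a+2)·L̂_{n+1}(x;a) + 2(n+a+2)(3n+2a+2)·L̂_n(x;a) + 4(n+a+2)(n+a)·n·L̂_{n-1}(x;a) + (n+a+2)(n+a-1)·n·(n-1)·L̂_{n-2}(x;a), where L̂_m := 0 for m < 0. -/
import Mathlib

open Polynomial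

/-- The monic generalized Laguerre polynomial `L_n^{(a)}`,
`L_n^{(a)}(x) = ∑_{k=0}^n (-1)^{n-k} (n choose k) (a+k+1)_{n-k} x^k`,
the monic version of the classical Laguerre polynomial, defined by the Rodrigues
formula `L_n^{(a)}(x) = (-1)^n e^x x^{-a} (d/dx)^n [x^{n+a} e^{-x}]`. -/
noncomputable def laguerreM (n : ℕ) (a : ℝ) : Polynomial ℝ :=
  ∑ k ∈ Finset.range (n + 1),
    C ((-1 : ℝ)^(n - k) * (n.choose k : ℝ) * (ascPochhammer ℝ (n - k)).eval (a + k + 1)) * X ^ k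

lemma asc_left_eval (n : ℕ) (t : ℝ) :
    (ascPochhammer ℝ (n+1)).eval t = t * (ascPochhammer ℝ n).eval (t+1) := by
  rw [ascPochhammer_succ_left]
  simp [eval_comp]

lemma laguerreM_coeff (n : ℕ) (a : ℝ) (j : ℕ) :
    (laguerreM n a).coeff j = if j ≤ n then
      (-1 : ℝ)^(n - j) * (n.choose j : ℝ) * (ascPochhammer ℝ (n - j)).eval (a + j + 1)
    else 0 := by
  rw [laguerreM, finset_sum_coeff]
  simp only [coeff_C_mul, coeff_X_pow, mul_ite, mul_one, mul_zero, Finset.sum_ite_eq, Finset.sum_ite_eq',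
    Finset.mem_range, Nat.lt_succ_iff]

lemma lagD (k : ℕ) (a : ℝ) :
    derivative (laguerreM (k+1) a) = C ((k:ℝ)+1) * laguerreM k (a+1) := by
  ext j
  rw [coeff_derivative, coeff_C_mul, laguerreM_coeff, laguerreM_coeff]
  by_cases h : j ≤ k
  · rw [if_pos (by omega : j + 1 ≤ k + 1), if_pos h,
      show k + 1 - (j + 1) = k - j from by omega,
      show a + (↑(j+1):ℝ) + 1 = (a+1) + (j:ℝ) + 1 from by push_cast; ring]
    have hc : ((k:ℝ)+1) * (k.choose j : ℝ) = ((k+1).choose (j+1) : ℝ) * ((j:ℝ)+1) := by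
      exact_mod_cast congrArg (Nat.cast (R := ℝ)) (Nat.add_one_mul_choose_eq k j)
    linear_combination (-(-1:ℝ)^(k-j) * (ascPochhammer ℝ (k-j)).eval ((a+1) + (j:ℝ) + 1)) * hc
  · rw [if_neg (by omega), if_neg h, zero_mul, mul_zero]

lemma lagS (k : ℕ) (a : ℝ) :
    laguerreM (k+1) a = laguerreM (k+1) (a+1) + C ((k:ℝ)+1) * laguerreM k (a+1) := by
  ext j
  rw [coeff_add, coeff_C_mul, laguerreM_coeff, laguerreM_coeff, laguerreM_coeff]
  by_cases h : j ≤ k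
  · rw [if_pos (by omega : j ≤ k + 1), if_pos (by omega : j ≤ k + 1), if_pos h,
      show k + 1 - j = (k - j) + 1 from by omega, pow_succ, asc_left_eval,
      ascPochhammer_succ_eval,
      show a + (j:ℝ) + 1 + 1 = (a+1) + (j:ℝ) + 1 from by ring,
      Nat.cast_sub h]
    have hc : ((k+1).choose j : ℝ) * ((k:ℝ) + 1 - (j:ℝ)) = ((k:ℝ)+1) * (k.choose j : ℝ) := by
      have h1 := Nat.choose_succ_right_eq (k+1) j
      have h2 := Nat.add_one_mul_choose_eq k j
      have h3 : (k+1) * k.choose j = (k+1).choose j * (k+1-j) := by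
        rw [h2, h1]
      have h4 : (((k+1) * k.choose j : ℕ) : ℝ) = ((((k+1).choose j) * (k+1-j) : ℕ) : ℝ) := by
        exact_mod_cast congrArg (Nat.cast (R := ℝ)) h3
      push_cast [Nat.cast_sub (by omega : j ≤ k+1)] at h4
      linarith [h4]
    linear_combination ((-1:ℝ)^(k-j) * (ascPochhammer ℝ (k-j)).eval ((a+1) + (j:ℝ) + 1)) * hc
  · by_cases h2 : j = k + 1
    · subst h2
      simp [Nat.sub_self, ascPochhammer_zero]
    · rw [if_neg (by omega), if_neg (by omega), if_neg h, mul_zero, add_zero]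

lemma lagX (k : ℕ) (a : ℝ) :
    X * laguerreM k (a+1) = laguerreM (k+1) a + C (a + (k:ℝ) + 1) * laguerreM k a := by
  ext j
  rw [coeff_add, coeff_C_mul, laguerreM_coeff, laguerreM_coeff]
  cases j with
  | zero =>
    rw [mul_coeff_zero, coeff_X_zero, zero_mul, if_pos (by omega : 0 ≤ k + 1),
      if_pos (by omega : 0 ≤ k), Nat.sub_zero, Nat.sub_zero, Nat.choose_zero_right,
      Nat.choose_zero_right, ascPochhammer_succ_eval, pow_succ]
    push_cast
    ring
  | succ i =>
    rw [coeff_X_mul, laguerreM_coeff]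
    by_cases h : i + 1 ≤ k
    · rw [if_pos (by omega : i ≤ k), if_pos (by omega : i + 1 ≤ k + 1), if_pos h,
        show k - i = (k - (i+1)) + 1 from by omega,
        show k + 1 - (i + 1) = (k - (i+1)) + 1 from by omega,
        pow_succ, show (a+1) + (i:ℝ) + 1 = a + (↑(i+1):ℝ) + 1 from by push_cast; ring,
        ascPochhammer_succ_eval, Nat.cast_sub h]
      have hc : (((k+1).choose (i+1) : ℝ)) = (k.choose i : ℝ) + (k.choose (i+1) : ℝ) := by
        exact_mod_cast congrArg (Nat.cast (R := ℝ)) (Nat.choose_succ_succ' k i)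
      push_cast
      linear_combination (((-1:ℝ))^(k-(i+1)) *
        (ascPochhammer ℝ (k-(i+1))).eval (a + ((i:ℝ) + 1) + 1) * (a + (k:ℝ) + 1)) * hc
    · by_cases h2 : i = k
      · subst h2
        simp [Nat.sub_self, ascPochhammer_zero]
      · rw [if_neg (by omega), if_neg (by omega), if_neg (by omega), mul_zero, add_zero]

lemma asc1 (t : ℝ) : (ascPochhammer ℝ 1).eval t = t := by
  simp [ascPochhammer_one]

lemma asc2 (t : ℝ) : (ascPochhammer ℝ 2).eval t = t*(t+1) := by
  rw [show (2:ℕ) = 1+1 from rfl, ascPochhammer_succ_eval, asc1]; norm_num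

lemma asc3 (t : ℝ) : (ascPochhammer ℝ 3).eval t = t*(t+1)*(t+2) := by
  rw [show (3:ℕ) = 2+1 from rfl, ascPochhammer_succ_eval, asc2]; norm_num

lemma asc4 (t : ℝ) : (ascPochhammer ℝ 4).eval t = t*(t+1)*(t+2)*(t+3) := by
  rw [show (4:ℕ) = 3+1 from rfl, ascPochhammer_succ_eval, asc3]; norm_num

/-- Type-1 X₁-Laguerre polynomials (with `L̂_m = 0` for `m < 0`). -/
noncomputable def XL1 (a : ℝ) : ℤ → Polynomial ℝ := fun m =>
  if m < 0 then 0 else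
    -(X + C (a + 1)) * derivative (laguerreM m.toNat a)
      + (X + C (a + 2)) * laguerreM m.toNat a

set_option maxHeartbeats 2000000 in
/-- five-term recurrence for the type-1 X₁-Laguerre polynomials. -/
theorem X1_laguerre_typeI_recurrence (a : ℝ) (n : ℤ) (hn : 0 ≤ n) :
    (X^2 + C (2*a + 2) * X + C (a*(a + 1))) * XL1 a n
      = XL1 a (n + 2)
        + C (4*((n : ℝ) + a + 2)) * XL1 a (n + 1)
        + C (2*((n : ℝ) + a + 2)*(3*(n : ℝ) + 2*a + 2)) * XL1 a n
        + C (4*((n : ℝ) + a + 2)*((n : ℝ) + a)*(n : ℝ)) * XL1 a (n - 1)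
        + C (((n : ℝ) + a + 2)*((n : ℝ) + a - 1)*(n : ℝ)*((n : ℝ) - 1)) * XL1 a (n - 2) := by
  have XL1_nat : ∀ (k : ℕ), XL1 a (k : ℤ) = -(X + C (a+1)) * derivative (laguerreM k a)
      + (X + C (a+2)) * laguerreM k a := by
    intro k; simp [XL1]
  have XL1_neg : ∀ (k : ℤ), k < 0 → XL1 a k = 0 := by intro k hk; simp [XL1, hk]
  have l0 : laguerreM 0 a = 1 := by
    rw [laguerreM]; norm_num
  have l1 : laguerreM 1 a = C (-(a+1)) + X := by
    rw [laguerreM]; norm_num [Finset.sum_range_succ, Nat.choose, asc1]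
    try simp only [map_add, map_mul, map_neg, map_one, map_ofNat]
    try ring
  have l2 : laguerreM 2 a = C ((a+1)*(a+2)) + C (-2*(a+2)) * X + X^2 := by
    rw [laguerreM]; norm_num [Finset.sum_range_succ, Nat.choose, asc1, asc2]
    try simp only [map_add, map_mul, map_neg, map_one, map_ofNat]
    try ring
  have l3 : laguerreM 3 a = C (-((a+1)*(a+2)*(a+3))) + C (3*(a+2)*(a+3)) * X
      + C (-3*(a+3)) * X^2 + X^3 := by
    rw [laguerreM]; norm_num [Finset.sum_range_succ, Nat.choose, asc1, asc2, asc3]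
    try simp only [map_add, map_mul, map_neg, map_one, map_ofNat]
    try ring
  have l4 : laguerreM 4 a = C ((a+1)*(a+2)*(a+3)*(a+4)) + C (-4*(a+2)*(a+3)*(a+4)) * X
      + C (6*(a+3)*(a+4)) * X^2 + C (-4*(a+4)) * X^3 + X^4 := by
    rw [laguerreM]; norm_num [Finset.sum_range_succ, Nat.choose, asc1, asc2, asc3, asc4]
    try simp only [map_add, map_mul, map_neg, map_one, map_ofNat]
    try ring
  lift n to ℕ using hn
  rcases n with _|_|_|m
  · norm_num [XL1]
    simp only [show (0:ℤ).toNat = 0 from rfl, show (1:ℤ).toNat = 1 from rfl,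
      show (2:ℤ).toNat = 2 from rfl, show (3:ℤ).toNat = 3 from rfl,
      show (4:ℤ).toNat = 4 from rfl]
    simp only [l0, l1, l2, l3, l4]
    simp only [derivative_add, derivative_C_mul, derivative_X_pow, derivative_X, derivative_C,
      derivative_one, map_one]
    push_cast
    simp only [map_add, map_mul, map_sub, map_neg, map_ofNat, map_one, map_zero, map_natCast]
    ring
  · norm_num [XL1]
    simp only [show (0:ℤ).toNat = 0 from rfl, show (1:ℤ).toNat = 1 from rfl,
      show (2:ℤ).toNat = 2 from rfl, show (3:ℤ).toNat = 3 from rfl,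
      show (4:ℤ).toNat = 4 from rfl]
    simp only [l0, l1, l2, l3, l4]
    simp only [derivative_add, derivative_C_mul, derivative_X_pow, derivative_X, derivative_C,
      derivative_one, map_one]
    push_cast
    simp only [map_add, map_mul, map_sub, map_neg, map_ofNat, map_one, map_zero, map_natCast]
    ring
  · norm_num [XL1]
    simp only [show (0:ℤ).toNat = 0 from rfl, show (1:ℤ).toNat = 1 from rfl,
      show (2:ℤ).toNat = 2 from rfl, show (3:ℤ).toNat = 3 from rfl,
      show (4:ℤ).toNat = 4 from rfl]
    simp only [l0, l1, l2, l3, l4]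
    simp only [derivative_add, derivative_C_mul, derivative_X_pow, derivative_X, derivative_C,
      derivative_one, map_one]
    push_cast
    simp only [map_add, map_mul, map_sub, map_neg, map_ofNat, map_one, map_zero, map_natCast]
    ring
  · rw [show ((m+3:ℕ):ℤ) + 2 = ((m+5:ℕ):ℤ) from by push_cast; ring,
      show ((m+3:ℕ):ℤ) + 1 = ((m+4:ℕ):ℤ) from by push_cast; ring,
      show ((m+3:ℕ):ℤ) - 1 = ((m+2:ℕ):ℤ) from by push_cast; ring,
      show ((m+3:ℕ):ℤ) - 2 = ((m+1:ℕ):ℤ) from by push_cast; ring,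
      XL1_nat, XL1_nat, XL1_nat, XL1_nat, XL1_nat]
    simp only [show m+1+1+1 = m+3 from rfl]
    have hD0 := lagD m a
    have hD1 := lagD (m+1) a
    have hD2 := lagD (m+2) a
    have hD3 := lagD (m+3) a
    have hD4 := lagD (m+4) a
    have hS0 := lagS m a
    have hS1 := lagS (m+1) a
    have hS2 := lagS (m+2) a
    have hS3 := lagS (m+3) a
    have hS4 := lagS (m+4) a
    have hX0 := lagX (m+1) a
    have hX1 := lagX (m+2) a
    have hX2 := lagX (m+3) a
    have hX3 := lagX (m+4) a
    simp only [show m+1+1 = m+2 from rfl, show m+2+1 = m+3 from rfl, show m+3+1 = m+4 from rfl,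
      show m+4+1 = m+5 from rfl] at hD0 hD1 hD2 hD3 hD4 hS0 hS1 hS2 hS3 hS4 hX0 hX1 hX2 hX3
    push_cast at hD0 hD1 hD2 hD3 hD4 hS0 hS1 hS2 hS3 hS4 hX0 hX1 hX2 hX3 ⊢
    simp only [map_add, map_mul, map_sub, map_ofNat, map_one, map_zero, map_natCast]
      at hD0 hD1 hD2 hD3 hD4 hS0 hS1 hS2 hS3 hS4 hX0 hX1 hX2 hX3 ⊢
    linear_combination (norm := ring1)
      ((60 : Polynomial ℝ) + (102 : Polynomial ℝ)*(C a) + (139 : Polynomial ℝ)*(C a)*((m : ℕ) : Polynomial ℝ) + (47 : Polynomial ℝ)*(C a)*((m : ℕ) : Polynomial ℝ)*X + (68 : Polynomial ℝ)*(C a)*((m : ℕ) : Polynomial ℝ)^2 + (17 : Polynomial ℝ)*(C a)*((m : ℕ) : Polynomial ℝ)^2*X + (14 : Polynomial ℝ)*(C a)*((m : ℕ) : Polynomial ℝ)^3 + (2 : Polynomial ℝ)*(C a)*((m : ℕ) : Polynomial ℝ)^3*X + (C a)*((m : ℕ) : Polynomial ℝ)^4 + (42 : Polynomial ℝ)*(C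 a)*X + (48 : Polynomial ℝ)*(C a)^2 + (52 : Polynomial ℝ)*(C a)^2*((m : ℕ) : Polynomial ℝ) + (5 : Polynomial ℝ)*(C a)^2*((m : ℕ) : Polynomial ℝ)*X + (18 : Polynomial ℝ)*(C a)^2*((m : ℕ) : Polynomial ℝ)^2 + (C a)^2*((m : ℕ) : Polynomial ℝ)^2*X + (2 : Polynomial ℝ)*(C a)^2*((m : ℕ) : Polynomial ℝ)^3 + (6 : Polynomial ℝ)*(C a)^2*X + (6 : Polynomial ℝ)*(C a)^3 + (5 : Polynomial ℝ)*(C a)^3*((m : ℕ) : Polynomial ℝ) + (C a)^3*((m : ℕ) : Polynomial ℝ)^2 + (92 : Polynomial ℝ)*((m : ℕ) : Polynomial ℝ) + (92 : Polynomial ℝ)*((m : ℕ) : Polynomial ℝ)*X + (51 : Polynomial ℝ)*((m : ℕ) : Polynomial ℝ)^2 + (51 : Polynomial ℝ)*((m : ℕ) : Polynomial ℝ)^2*X + (12 : Polynomial ℝ)*((m : ℕ) : Polynomial ℝ)^3 + (12 : Polynomial ℝ)*((m : ℕ) : Polynomial ℝ)^3*X + ((m : ℕ) : Polynomial ℝ)^4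 + ((m : ℕ) : Polynomial ℝ)^4*X + (60 : Polynomial ℝ)*X) * hD0
      + ((180 : Polynomial ℝ) + (276 : Polynomial ℝ)*(C a) + (212 : Polynomial ℝ)*(C a)*((m : ℕ) : Polynomial ℝ) + (56 : Polynomial ℝ)*(C a)*((m : ℕ) : Polynomial ℝ)*X + (52 : Polynomial ℝ)*(C a)*((m : ℕ) : Polynomial ℝ)^2 + (8 : Polynomial ℝ)*(C a)*((m : ℕ) : Polynomial ℝ)^2*X + (4 : Polynomial ℝ)*(C a)*((m : ℕ) : Polynomial ℝ)^3 + (96 : Polynomial ℝ)*(C a)*X + (108 : Polynomial ℝ)*(C a)^2 + (60 : Polynomial ℝ)*(C a)^2*((m : ℕ) : Polynomial ℝ) + (4 : Polynomial ℝ)*(C a)^2*((m : ℕ) : Polynomial ℝ)*X + (8 : Polynomial ℝ)*(C a)^2*((m : ℕ) : Polynomial ℝ)^2 + (12 : Polynomial ℝ)*(C a)^2*X + (12 : Polynomial ℝ)*(C a)^3 + (4 : Polynomial ℝ)*(C a)^3*((m : ℕ) : Polynomial ℝ) + (156 : Polynomial ℝ)*((m : ℕ) : Polynomial ℝ) + (156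 : Polynomial ℝ)*((m : ℕ) : Polynomial ℝ)*X + (44 : Polynomial ℝ)*((m : ℕ) : Polynomial ℝ)^2 + (44 : Polynomial ℝ)*((m : ℕ) : Polynomial ℝ)^2*X + (4 : Polynomial ℝ)*((m : ℕ) : Polynomial ℝ)^3 + (4 : Polynomial ℝ)*((m : ℕ) : Polynomial ℝ)^3*X + (180 : Polynomial ℝ)*X) * hD1
      + ((110 : Polynomial ℝ) + (151 : Polynomial ℝ)*(C a) + (62 : Polynomial ℝ)*(C a)*((m : ℕ) : Polynomial ℝ) + (10 : Polynomial ℝ)*(C a)*((m : ℕ) : Polynomial ℝ)*X + (6 : Polynomial ℝ)*(C a)*((m : ℕ) : Polynomial ℝ)^2 + (37 : Polynomial ℝ)*(C a)*X + ((-3) : Polynomial ℝ)*(C a)*X^2 + (44 : Polynomial ℝ)*(C a)^2 + (10 : Polynomial ℝ)*(C a)^2*((m : ℕ) : Polynomial ℝ) + (C a)^2*X + (3 : Polynomial ℝ)*(C a)^3 + (52 : Polynomial ℝ)*((m : ℕ) : Polynomial ℝ) + (52 : Polynomial ℝ)*((m : ℕ) : Polynomial ℝ)*X + (6 : Polynomial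 ℝ)*((m : ℕ) : Polynomial ℝ)^2 + (6 : Polynomial ℝ)*((m : ℕ) : Polynomial ℝ)^2*X + (108 : Polynomial ℝ)*X + ((-3) : Polynomial ℝ)*X^2 + ((-1) : Polynomial ℝ)*X^3) * hD2
      + ((20 : Polynomial ℝ) + (24 : Polynomial ℝ)*(C a) + (4 : Polynomial ℝ)*(C a)*((m : ℕ) : Polynomial ℝ) + (4 : Polynomial ℝ)*(C a)*X + (4 : Polynomial ℝ)*(C a)^2 + (4 : Polynomial ℝ)*((m : ℕ) : Polynomial ℝ) + (4 : Polynomial ℝ)*((m : ℕ) : Polynomial ℝ)*X + (20 : Polynomial ℝ)*X) * hD3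
      + ((1 : Polynomial ℝ) + (C a) + X) * hD4
      + (((-60) : Polynomial ℝ) + ((-102) : Polynomial ℝ)*(C a) + ((-139) : Polynomial ℝ)*(C a)*((m : ℕ) : Polynomial ℝ) + ((-47) : Polynomial ℝ)*(C a)*((m : ℕ) : Polynomial ℝ)*X + ((-68) : Polynomial ℝ)*(C a)*((m : ℕ) : Polynomial ℝ)^2 + ((-17) : Polynomial ℝ)*(C a)*((m : ℕ) : Polynomial ℝ)^2*X + ((-14) : Polynomial ℝ)*(C a)*((m : ℕ) : Polynomial ℝ)^3 + ((-2) : Polynomial ℝ)*(C a)*((m : ℕ) : Polynomial ℝ)^3*X + ((-1) : Polynomial ℝ)*(C a)*((m : ℕ) : Polynomial ℝ)^4 + ((-42) : Polynomial ℝ)*(C a)*X + ((-48) : Polynomial ℝ)*(C a)^2 + ((-52) : Polynomial ℝ)*(C a)^2*((m : ℕ) : Polynomial ℝ) + ((-5) : Polynomial ℝ)*(C a)^2*((m : ℕ) : Polynomial ℝ)*X + ((-18) : Polynomial ℝ)*(C a)^2*((m : ℕ) : Polynomial ℝ)^2 + ((-1) : Polynomial ℝ)*(C a)^2*((m : ℕ)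 : Polynomial ℝ)^2*X + ((-2) : Polynomial ℝ)*(C a)^2*((m : ℕ) : Polynomial ℝ)^3 + ((-6) : Polynomial ℝ)*(C a)^2*X + ((-6) : Polynomial ℝ)*(C a)^3 + ((-5) : Polynomial ℝ)*(C a)^3*((m : ℕ) : Polynomial ℝ) + ((-1) : Polynomial ℝ)*(C a)^3*((m : ℕ) : Polynomial ℝ)^2 + ((-92) : Polynomial ℝ)*((m : ℕ) : Polynomial ℝ) + ((-92) : Polynomial ℝ)*((m : ℕ) : Polynomial ℝ)*X + ((-51) : Polynomial ℝ)*((m : ℕ) : Polynomial ℝ)^2 + ((-51) : Polynomial ℝ)*((m : ℕ) : Polynomial ℝ)^2*X + ((-12) : Polynomial ℝ)*((m : ℕ) : Polynomial ℝ)^3 + ((-12) : Polynomial ℝ)*((m : ℕ) : Polynomial ℝ)^3*X + ((-1) : Polynomial ℝ)*((m : ℕ) : Polynomial ℝ)^4 + ((-1) : Polynomial ℝ)*((m : ℕ) : Polynomial ℝ)^4*X + ((-60) : Polynomial ℝ)*X) * hS0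
      + (((-150) : Polynomial ℝ) + ((-225) : Polynomial ℝ)*(C a) + ((-168) : Polynomial ℝ)*(C a)*((m : ℕ) : Polynomial ℝ) + ((-42) : Polynomial ℝ)*(C a)*((m : ℕ) : Polynomial ℝ)*X + ((-40) : Polynomial ℝ)*(C a)*((m : ℕ) : Polynomial ℝ)^2 + ((-6) : Polynomial ℝ)*(C a)*((m : ℕ) : Polynomial ℝ)^2*X + ((-3) : Polynomial ℝ)*(C a)*((m : ℕ) : Polynomial ℝ)^3 + ((-72) : Polynomial ℝ)*(C a)*X + ((-84) : Polynomial ℝ)*(C a)^2 + ((-46) : Polynomial ℝ)*(C a)^2*((m : ℕ) : Polynomial ℝ) + ((-3) : Polynomial ℝ)*(C a)^2*((m : ℕ) : Polynomial ℝ)*X + ((-6) : Polynomial ℝ)*(C a)^2*((m : ℕ) : Polynomial ℝ)^2 + ((-9) : Polynomial ℝ)*(C a)^2*X + ((-9) : Polynomial ℝ)*(C a)^3 + ((-3) : Polynomial ℝ)*(C a)^3*((m : ℕ) : Polynomial ℝ) + ((-125) : Polynomial ℝ)*((m : ℕ) : Polynomial ℝ) + ((-117) : Polynomial ℝ)*((m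 : ℕ) : Polynomial ℝ)*X + ((-34) : Polynomial ℝ)*((m : ℕ) : Polynomial ℝ)^2 + ((-33) : Polynomial ℝ)*((m : ℕ) : Polynomial ℝ)^2*X + ((-3) : Polynomial ℝ)*((m : ℕ) : Polynomial ℝ)^3 + ((-3) : Polynomial ℝ)*((m : ℕ) : Polynomial ℝ)^3*X + ((-135) : Polynomial ℝ)*X) * hS1
      + (((-60) : Polynomial ℝ) + ((-76) : Polynomial ℝ)*(C a) + ((-31) : Polynomial ℝ)*(C a)*((m : ℕ) : Polynomial ℝ) + ((-3) : Polynomial ℝ)*(C a)*((m : ℕ) : Polynomial ℝ)*X + ((-3) : Polynomial ℝ)*(C a)*((m : ℕ) : Polynomial ℝ)^2 + ((-4) : Polynomial ℝ)*(C a)*X + (4 : Polynomial ℝ)*(C a)*X^2 + ((-16) : Polynomial ℝ)*(C a)^2 + ((-4) : Polynomial ℝ)*(C a)^2*((m : ℕ) : Polynomial ℝ) + (3 : Polynomial ℝ)*(C a)^2*X + ((-27) : Polynomial ℝ)*((m : ℕ) : Polynomial ℝ) + ((-24) : Polynomial ℝ)*((m : ℕ) : Polynomial ℝ)*X + ((m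 : ℕ) : Polynomial ℝ)*X^2 + ((-3) : Polynomial ℝ)*((m : ℕ) : Polynomial ℝ)^2 + ((-3) : Polynomial ℝ)*((m : ℕ) : Polynomial ℝ)^2*X + ((-43) : Polynomial ℝ)*X + (8 : Polynomial ℝ)*X^2 + X^3) * hS2
      + (((-5) : Polynomial ℝ) + ((-5) : Polynomial ℝ)*(C a) + ((-1) : Polynomial ℝ)*(C a)*((m : ℕ) : Polynomial ℝ) + (C a)*X + ((-1) : Polynomial ℝ)*((m : ℕ) : Polynomial ℝ) + ((-1) : Polynomial ℝ)*((m : ℕ) : Polynomial ℝ)*X + ((-3) : Polynomial ℝ)*X + X^2) * hS3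
      + ((30 : Polynomial ℝ) + (6 : Polynomial ℝ)*(C a) + (5 : Polynomial ℝ)*(C a)*((m : ℕ) : Polynomial ℝ) + (C a)*((m : ℕ) : Polynomial ℝ)^2 + (31 : Polynomial ℝ)*((m : ℕ) : Polynomial ℝ) + (10 : Polynomial ℝ)*((m : ℕ) : Polynomial ℝ)^2 + ((m : ℕ) : Polynomial ℝ)^3) * hX0
      + ((60 : Polynomial ℝ) + (27 : Polynomial ℝ)*(C a) + (12 : Polynomial ℝ)*(C a)*((m : ℕ) : Polynomial ℝ) + (C a)*((m : ℕ) : Polynomial ℝ)*X + (C a)*((m : ℕ) : Polynomial ℝ)^2 + (3 : Polynomial ℝ)*(C a)*X + (3 : Polynomial ℝ)*(C a)^2 + (C a)^2*((m : ℕ) : Polynomial ℝ) + (32 : Polynomial ℝ)*((m : ℕ) : Polynomial ℝ) + (8 : Polynomial ℝ)*((m : ℕ) : Polynomial ℝ)*X + (4 : Polynomial ℝ)*((m : ℕ) : Polynomial ℝ)^2 + ((m : ℕ) : Polynomial ℝ)^2*X + (15 : Polynomial ℝ)*X) * hX1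
      + ((25 : Polynomial ℝ) + (16 : Polynomial ℝ)*(C a) + (2 : Polynomial ℝ)*(C a)*((m : ℕ) : Polynomial ℝ) + (4 : Polynomial ℝ)*(C a)*X + (3 : Polynomial ℝ)*(C a)^2 + (5 : Polynomial ℝ)*((m : ℕ) : Polynomial ℝ) + (2 : Polynomial ℝ)*((m : ℕ) : Polynomial ℝ)*X + (12 : Polynomial ℝ)*X + X^2) * hX2
      + ((2 : Polynomial ℝ) + (C a) + X) * hX3
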